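/- arXiv:1002.4150 — 2 statements merged into one kernel-verified Lean document; each statement's English description precedes it below -/
import Mathlib

section
/- Under the conditions 2εk₁² - k₁k₂ - 1 = 0 and 3k₁k₃ - 1 = 0, the curve y = g(x) = ak₁ + bk₁x + εk₁x² + x³/3 is invariant for the system ẋ = y, ẏ = ax + k₁by + bx² + k₂xy + x²y + εx³ + k₃x⁴; that is, g'(x)·g(x) = ax + k₁b·g(x) + bx² + k₂x·g(x) + x²·g(x) + εx³ + k₃x⁴ for all x. -/
theorem hasDerivAt_cubic {𝕜 : Type*} [NontriviallyNormedField 𝕜] (c₀ c₁ c₂ c₃ x : 𝕜) :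
    HasDerivAt (fun x => c₀ + c₁ * x + c₂ * x ^ 2 + c₃ * x ^ 3)
      (c₁ + 2 * c₂ * x + 3 * c₃ * x ^ 2) x := by
  have h := ((((hasDerivAt_id x).const_mul c₁).const_add c₀).add
    ((hasDerivAt_pow 2 x).const_mul c₂)).add ((hasDerivAt_pow 3 x).const_mul c₃)
  exact h.congr_deriv (by push_cast; ring)

theorem invariant_manifold_general (a b k₁ k₂ k₃ ε : ℝ)
    (hc₁ : 2 * ε * k₁ ^ 2 - k₁ * k₂ - 1 = 0) (hc₂ : 3 * k₁ * k₃ = 1)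
    (g : ℝ → ℝ)
    (hg : ∀ x, g x = a * k₁ + b * k₁ * x + ε * k₁ * x ^ 2 + (1 / 3) * x ^ 3) :
    ∀ x : ℝ, deriv g x * g x =
      a * x + k₁ * b * g x + b * x ^ 2 + k₂ * x * g x + x ^ 2 * g x
        + ε * x ^ 3 + k₃ * x ^ 4 := by
  intro x
  have hg' : deriv g x = b * k₁ + 2 * (ε * k₁) * x + 3 * (1 / 3) * x ^ 2 := by
    rw [funext hg]
    exact (hasDerivAt_cubic _ _ _ _ x).deriv
  -- `k₁ * (k₂ + 3k₃ - 2εk₁)` is minus the left side of `hc₁`; multiplying by `1 = 3k₁k₃`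
  -- instead of dividing by `k₁` removes the factor `k₁`.
  have hk : k₂ + 3 * k₃ = 2 * ε * k₁ := by
    linear_combination (-3 * k₃) * hc₁ + (3 * k₃ - (k₂ + 3 * k₃ - 2 * ε * k₁)) * hc₂
  rw [hg', hg x]
  -- Comparing coefficients, the two sides differ in degrees 1, 2, 3 by multiples of `hc₁`
  -- and in degree 4 by `(k₂ + 3k₃ - 2εk₁)/3`.
  linear_combination (a * x + b * x ^ 2 + ε * x ^ 3) * hc₁ - x ^ 4 / 3 * hk

/-- Under the conditions `2εk₁² - k₁k₂ - 1 = 0` and `3k₁k₃ = 1`, the curve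
`y = g(x) = ak₁ + bk₁x + εk₁x² + x³/3` is invariant for the minimal model:
`g'(x)·g(x) = f₂(x, g(x))` for all `x`. -/
theorem invariant_manifold (a b k₁ k₂ k₃ ε : ℝ) (hε : ε = 1 ∨ ε = -1)
    (hk₁ : k₁ ≠ 0)
    (hc₁ : 2 * ε * k₁ ^ 2 - k₁ * k₂ - 1 = 0) (hc₂ : 3 * k₁ * k₃ = 1)
    (g : ℝ → ℝ)
    (hg : ∀ x, g x = a * k₁ + b * k₁ * x + ε * k₁ * x ^ 2 + (1 / 3) * x ^ 3) :
    ∀ x : ℝ, deriv g x * g x =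
      a * x + k₁ * b * g x + b * x ^ 2 + k₂ * x * g x + x ^ 2 * g x
        + ε * x ^ 3 + k₃ * x ^ 4 :=
  invariant_manifold_general a b k₁ k₂ k₃ ε hc₁ hc₂ g hg
end

section
/- For the minimal model ẋ = y, ẏ = ax + k₁by + bx² + k₂xy + x²y + εx³ + k₃x⁴ with k₃ ≠ 0 and 1 - 3k₃b ≥ 0, the equilibria on the x-axis other than the origin that coalesce at the codimension-two point are the roots of the quadratic obtained from factoring, and they coincide precisely when a = a_SN(b) := (ε/(27k₃²))(2√((1-3k₃b)³) - 2 + 9k₃b). -/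
/-! With `s = √(1 - 3k₃b)` the point `x_SN` satisfies `3k₃ x_SN = ε(s - 1)`, so it is a critical
point of the cubic `h`, because `3k₃ h'(x) = (3k₃x + ε)² - s²`. Substituting it into `h` gives
`27k₃² h(x_SN) = 27k₃² a - ε(s - 1)²(2s + 1)`, and `(s - 1)²(2s + 1) = 2s³ - 2 + 9k₃b`, so `x_SN`
is a double root exactly when `a` lies on the saddle-node curve. -/

lemma Real.sqrt_pow {x : ℝ} (hx : 0 ≤ x) (n : ℕ) : √(x ^ n) = √x ^ n := by
  rw [← Real.sqrt_sq (pow_nonneg (Real.sqrt_nonneg x) n), ← pow_mul, mul_comm, pow_mul,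
    Real.sq_sqrt hx]

lemma deriv_cubic (a b c d x : ℝ) :
    deriv (fun x => a + b * x + c * x ^ 2 + d * x ^ 3) x = b + 2 * c * x + 3 * d * x ^ 2 := by
  have : HasDerivAt (fun x => a + b * x + c * x ^ 2 + d * x ^ 3)
      (b * 1 + c * (2 * x ^ 1) + d * (3 * x ^ 2)) x :=
    ((((hasDerivAt_id x).const_mul b).const_add a).add
      ((hasDerivAt_pow 2 x).const_mul c)).add ((hasDerivAt_pow 3 x).const_mul d)
  exact this.deriv.trans (by ring)

section CubicCriticalPoint

variable {a b d ε s x : ℝ} (hε : ε ^ 2 = 1) (hs : s ^ 2 = 1 - 3 * d * b)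
  (hx : 3 * d * x = ε * (s - 1))
include hε hs hx

lemma cubic_critical_point (hd : d ≠ 0) : b + 2 * ε * x + 3 * d * x ^ 2 = 0 := by
  have : 3 * d * (b + 2 * ε * x + 3 * d * x ^ 2) = 0 := by
    linear_combination (2 * (s - 1) + (s - 1) ^ 2) * hε +
      (2 * ε + 3 * d * x + ε * (s - 1)) * hx + hs
  simpa [hd] using this

lemma cubic_critical_value :
    27 * d ^ 2 * (a + b * x + ε * x ^ 2 + d * x ^ 3) =
      27 * d ^ 2 * a - ε * (2 * s ^ 3 - 2 + 9 * d * b) := by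
  linear_combination ε * (s - 1) ^ 2 * (s - 1 + 3) * hε + 3 * ε * s * hs +
    (9 * d * b + 3 * ε * (3 * d * x + ε * (s - 1)) +
      ((3 * d * x) ^ 2 + 3 * d * x * ε * (s - 1) + (ε * (s - 1)) ^ 2)) * hx

end CubicCriticalPoint

/-- For `h(x) = a + bx + εx² + k₃x³` with `k₃ > 0`, `ε = ±1`, `1 - 3k₃b ≥ 0`
and `3k₁k₃ = 1`, the point `x_SN = εk₁(√(1-3k₃b) - 1)` is a double root of `h`
(i.e. `h(x_SN) = h'(x_SN) = 0`) if and only if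
`a = (ε/(27k₃²))(2√((1-3k₃b)³) - 2 + 9k₃b)`. -/
theorem saddle_node_curve (a b k₁ k₃ ε : ℝ) (hε : ε = 1 ∨ ε = -1)
    (hk₃ : k₃ > 0) (hb : 1 - 3 * k₃ * b ≥ 0) (hk₁ : 3 * k₁ * k₃ = 1)
    (h : ℝ → ℝ) (hh : ∀ x, h x = a + b * x + ε * x ^ 2 + k₃ * x ^ 3)
    (xSN : ℝ) (hx : xSN = ε * k₁ * (Real.sqrt (1 - 3 * k₃ * b) - 1)) :
    (h xSN = 0 ∧ deriv h xSN = 0) ↔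
      a = ε / (27 * k₃ ^ 2) *
        (2 * Real.sqrt ((1 - 3 * k₃ * b) ^ 3) - 2 + 9 * k₃ * b) := by
  have hε2 : ε ^ 2 = 1 := by rcases hε with rfl | rfl <;> norm_num
  rw [Real.sqrt_pow hb]
  set s := √(1 - 3 * k₃ * b)
  have hs : s ^ 2 = 1 - 3 * k₃ * b := Real.sq_sqrt hb
  have hxs : 3 * k₃ * xSN = ε * (s - 1) := by
    rw [hx]; linear_combination ε * (s - 1) * hk₁
  have hderiv : deriv h xSN = 0 := by
    rw [funext hh, deriv_cubic]
    exact cubic_critical_point hε2 hs hxs hk₃.ne'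
  have hval := cubic_critical_value (a := a) hε2 hs hxs
  rw [← hh] at hval
  have h27 : 27 * k₃ ^ 2 ≠ 0 := by positivity
  rw [and_iff_left hderiv, ← mul_right_inj' h27, mul_zero, hval, sub_eq_zero,
    div_mul_eq_mul_div, eq_div_iff h27, mul_comm]
end
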